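/- arXiv:1602.05117 — 3 statements merged into one kernel-verified Lean document; each statement's English description precedes it below -/
import Mathlib

section
/- Let a, b, c, d, α, β be positive real numbers such that a ≤ c, b ≤ d, βd ≤ αb, and such that ψ(a+bt) > 0 and ψ(c+dt) > 0 for all t ∈ [0,∞). Then the function U(t) = [ψ(a+bt)]^α / [ψ(c+dt)]^β is non-decreasing on [0,∞). -/
/-- The digamma (psi) function: logarithmic derivative of the Gamma function. -/
noncomputable def psi (t : ℝ) : ℝ := deriv Real.Gamma t / Real.Gamma t

/-!
On `(0, ∞)` the digamma function is nondecreasing (`log Γ` is convex) and concave: by the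
recurrence `ψ(x) = ψ(x + n) - ∑_{k<n} (x + k)⁻¹` and since `ψ(x + n) - ψ(1 + n) → 0`, it is the
pointwise limit of the concave functions `ψ(1 + n) - ∑_{k<n} (x + k)⁻¹`. Hence `L = log ∘ ψ` is
concave and nondecreasing on `[a, ∞)`. For `s ≤ t`, `u = a + b s ≤ v = c + d s` and `h = t - s`,
concavity gives `L(v + d h) - L(v) ≤ L(u + d h) - L(u) ≤ (d / b) (L(u + b h) - L(u))`, and as
`L(u + b h) ≥ L(u)` and `β d ≤ α b`, the increment of `α L(a + b ·) - β L(c + d ·) = log U` over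
`[s, t]` is nonnegative.
-/

open Real Set Filter Topology

theorem ConcaveOn.of_tendsto {E ι : Type*} [AddCommMonoid E] [Module ℝ E] {s : Set E}
    {l : Filter ι} [l.NeBot] {f : ι → E → ℝ} {g : E → ℝ} (hs : Convex ℝ s)
    (hf : ∀ i, ConcaveOn ℝ s (f i)) (hfg : ∀ x ∈ s, Tendsto (fun i => f i x) l (𝓝 (g x))) :
    ConcaveOn ℝ s g :=
  ⟨hs, fun _ hx _ hy _ _ ha hb hab =>
    le_of_tendsto_of_tendsto' (((hfg _ hx).const_smul _).add ((hfg _ hy).const_smul _))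
      (hfg _ (hs hx hy ha hb hab)) fun i => (hf i).2 hx hy ha hb hab⟩

theorem ConcaveOn.log {E : Type*} [AddCommMonoid E] [Module ℝ E] {s : Set E} {f : E → ℝ}
    (hf : ConcaveOn ℝ s f) (hpos : ∀ x ∈ s, 0 < f x) : ConcaveOn ℝ s fun x => log (f x) :=
  ⟨hf.1, fun x hx y hy _ _ ha hb hab =>
    (strictConcaveOn_log_Ioi.concaveOn.2 (hpos x hx) (hpos y hy) ha hb hab).trans <|
      log_le_log (strictConcaveOn_log_Ioi.concaveOn.1 (hpos x hx) (hpos y hy) ha hb hab)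
        (hf.2 hx hy ha hb hab)⟩

section Increments

variable {𝕜 : Type*} [Field 𝕜] [LinearOrder 𝕜] [IsStrictOrderedRing 𝕜] {s : Set 𝕜} {f : 𝕜 → 𝕜}

theorem ConcaveOn.map_add_sub_map_le_of_le (hf : ConcaveOn 𝕜 s f) {x y h : 𝕜} (hx : x ∈ s)
    (hyh : y + h ∈ s) (hxy : x ≤ y) (hh : 0 ≤ h) : f (y + h) - f y ≤ f (x + h) - f x := by
  rcases hh.eq_or_lt with rfl | hh
  · simp
  have hS : 0 < y - x + h := by linarith
  obtain ⟨p, hp_def⟩ : ∃ p, p = (y - x) / (y - x + h) := ⟨_, rfl⟩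
  obtain ⟨q, hq_def⟩ : ∃ q, q = h / (y - x + h) := ⟨_, rfl⟩
  have hp : 0 ≤ p := hp_def ▸ by positivity
  have hq : 0 ≤ q := hq_def ▸ by positivity
  have hpq : p + q = 1 := by rw [hp_def, hq_def]; field_simp
  -- `x + h` and `y` are the convex combinations of `x` and `y + h` with weights `(p, q)`, `(q, p)`
  have hxh : p * f x + q * f (y + h) ≤ f (x + h) := by
    have hpt : p * x + q * (y + h) = x + h := by
      rw [hp_def, hq_def]; field_simp; ring
    simpa only [smul_eq_mul, hpt] using hf.2 hx hyh hp hq hpq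
  have hy : q * f x + p * f (y + h) ≤ f y := by
    have hpt : q * x + p * (y + h) = y := by
      rw [hp_def, hq_def]; field_simp; ring
    simpa only [smul_eq_mul, hpt] using hf.2 hx hyh hq hp ((add_comm q p).trans hpq)
  linear_combination hxh + hy - (f x + f (y + h)) * hpq

theorem ConcaveOn.mul_map_add_sub_map_le (hf : ConcaveOn 𝕜 s f) {x p q : 𝕜} (hx : x ∈ s)
    (hxq : x + q ∈ s) (hp : 0 ≤ p) (hpq : p ≤ q) :
    p * (f (x + q) - f x) ≤ q * (f (x + p) - f x) := by
  rcases hp.eq_or_lt with rfl | hp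
  · simp
  have hq : 0 < q := hp.trans_le hpq
  have hpt : (1 - p / q) * x + p / q * (x + q) = x + p := by field_simp; ring
  have hconc := hf.2 hx hxq (sub_nonneg.2 ((div_le_one hq).2 hpq)) (by positivity)
    (sub_add_cancel 1 (p / q))
  simp only [smul_eq_mul, hpt] at hconc
  have := mul_le_mul_of_nonneg_left hconc hq.le
  field_simp at this
  linarith

end Increments

theorem convexOn_inv_add {c : ℝ} (hc : 0 ≤ c) : ConvexOn ℝ (Ioi 0) fun x : ℝ => (x + c)⁻¹ := by
  have := ((convexOn_zpow (𝕜 := ℝ) (-1)).translate_left c).subset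
    (fun x (hx : 0 < x) => show 0 < c + x by positivity) (convex_Ioi 0)
  refine this.congr fun x _ => ?_
  simp [add_comm]

theorem convexOn_sum_inv_add_nat (n : ℕ) :
    ConvexOn ℝ (Ioi 0) fun x : ℝ => ∑ k ∈ Finset.range n, (x + k)⁻¹ := by
  induction n with
  | zero => simpa using convexOn_const (0 : ℝ) (convex_Ioi (0 : ℝ))
  | succ n ih =>
    refine (ih.add (convexOn_inv_add n.cast_nonneg)).congr fun x _ => ?_
    simp [Finset.sum_range_succ]

theorem hasDerivAt_log_Gamma {x : ℝ} (hx : 0 < x) :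
    HasDerivAt (fun y => log (Gamma y)) (psi x) x :=
  (differentiableAt_Gamma fun m => ((neg_nonpos.2 m.cast_nonneg).trans_lt hx).ne').hasDerivAt.log
    (Gamma_pos_of_pos hx).ne'

theorem psi_add_one {x : ℝ} (hx : 0 < x) : psi (x + 1) = psi x + x⁻¹ := by
  have hshift : HasDerivAt (fun y => log (Gamma (y + 1))) (psi (x + 1)) x :=
    (hasDerivAt_log_Gamma (by linarith)).comp_add_const x 1
  have hrec : (fun y => log y + log (Gamma y)) =ᶠ[𝓝 x] fun y => log (Gamma (y + 1)) := by
    filter_upwards [eventually_gt_nhds hx] with y hy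
    rw [Gamma_add_one hy.ne', log_mul hy.ne' (Gamma_pos_of_pos hy).ne']
  rw [add_comm (psi x)]
  exact hshift.unique (((hasDerivAt_log hx.ne').add (hasDerivAt_log_Gamma hx)).congr_of_eventuallyEq
    hrec.symm)

theorem psi_add_nat {x : ℝ} (hx : 0 < x) (n : ℕ) :
    psi (x + n) = psi x + ∑ k ∈ Finset.range n, (x + k)⁻¹ := by
  induction n with
  | zero => simp
  | succ n ih =>
    rw [Nat.cast_succ, ← add_assoc, psi_add_one (by positivity), ih, Finset.sum_range_succ,
      add_assoc]

theorem monotoneOn_psi : MonotoneOn psi (Ioi 0) :=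
  (convexOn_log_Gamma.monotoneOn_deriv fun _ hx => (hasDerivAt_log_Gamma hx).differentiableAt).congr
    fun _ hx => (hasDerivAt_log_Gamma hx).deriv

theorem psi_add_nat_le {x : ℝ} (hx : 0 < x) (m : ℕ) : psi (x + m) ≤ psi x + m / x := by
  rw [psi_add_nat hx]
  gcongr
  calc ∑ k ∈ Finset.range m, (x + k)⁻¹ ≤ ∑ _k ∈ Finset.range m, x⁻¹ :=
        Finset.sum_le_sum fun k _ => inv_anti₀ hx (le_add_of_nonneg_right k.cast_nonneg)
    _ = m / x := by simp [div_eq_mul_inv]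

theorem tendsto_psi_add_nat_sub_psi_add_nat_of_le {x y : ℝ} (hx : 0 < x) (hxy : x ≤ y) :
    Tendsto (fun n : ℕ => psi (y + n) - psi (x + n)) atTop (𝓝 0) := by
  have hy : 0 < y := hx.trans_le hxy
  set m := ⌈y - x⌉₊
  have hbound : ∀ n : ℕ, psi (y + n) - psi (x + n) ≤ m / (x + n) := fun n => by
    have hle : y + n ≤ x + n + m := by linarith [Nat.le_ceil (y - x)]
    linarith [monotoneOn_psi (mem_Ioi.2 (by positivity)) (mem_Ioi.2 (by positivity)) hle,
      psi_add_nat_le (by positivity : (0 : ℝ) < x + n) m]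
  refine tendsto_of_tendsto_of_tendsto_of_le_of_le tendsto_const_nhds ?_ (fun n => ?_) hbound
  · exact tendsto_const_nhds.div_atTop
      (tendsto_atTop_add_const_left _ x tendsto_natCast_atTop_atTop)
  · exact sub_nonneg.2 (monotoneOn_psi (mem_Ioi.2 (by positivity)) (mem_Ioi.2 (by positivity))
      (by linarith))

theorem tendsto_psi_add_nat_sub_psi_add_nat {x y : ℝ} (hx : 0 < x) (hy : 0 < y) :
    Tendsto (fun n : ℕ => psi (y + n) - psi (x + n)) atTop (𝓝 0) := by
  rcases le_total x y with hxy | hyx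
  · exact tendsto_psi_add_nat_sub_psi_add_nat_of_le hx hxy
  · simpa using (tendsto_psi_add_nat_sub_psi_add_nat_of_le hy hyx).neg

theorem concaveOn_psi : ConcaveOn ℝ (Ioi 0) psi := by
  refine ConcaveOn.of_tendsto (l := atTop) (convex_Ioi 0)
    (f := fun (n : ℕ) (x : ℝ) => psi (1 + n) - ∑ k ∈ Finset.range n, (x + k)⁻¹)
    (fun n => (concaveOn_const _ (convex_Ioi 0)).sub (convexOn_sum_inv_add_nat n)) fun x hx => ?_
  have := (tendsto_psi_add_nat_sub_psi_add_nat one_pos hx).const_sub (psi x)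
  simp only [psi_add_nat hx, sub_zero] at this
  convert this using 2 with n
  ring

theorem concaveOn_log_psi {x₀ : ℝ} (hx₀ : 0 < x₀) (hψ : 0 < psi x₀) :
    ConcaveOn ℝ (Ici x₀) fun x => log (psi x) :=
  (concaveOn_psi.subset (Ici_subset_Ioi.2 hx₀) (convex_Ici x₀)).log fun _ hx =>
    hψ.trans_le (monotoneOn_psi hx₀ (hx₀.trans_le hx) hx)

theorem monotoneOn_log_psi {x₀ : ℝ} (hx₀ : 0 < x₀) (hψ : 0 < psi x₀) :
    MonotoneOn (fun x => log (psi x)) (Ici x₀) := fun _ hx _ _ hxy =>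
  log_le_log (hψ.trans_le (monotoneOn_psi hx₀ (hx₀.trans_le hx) hx))
    (monotoneOn_psi (hx₀.trans_le hx) (hx₀.trans_le (le_trans hx hxy)) hxy)

theorem ConcaveOn.monotoneOn_mul_comp_sub_mul_comp {f : ℝ → ℝ} {x₀ a b c d α β : ℝ}
    (hf : ConcaveOn ℝ (Ici x₀) f) (hf' : MonotoneOn f (Ici x₀)) (ha : x₀ ≤ a) (hac : a ≤ c)
    (hb : 0 < b) (hbd : b ≤ d) (hβ : 0 ≤ β) (hβd : β * d ≤ α * b) :
    MonotoneOn (fun t => α * f (a + b * t) - β * f (c + d * t)) (Ici 0) := by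
  intro s (hs : 0 ≤ s) t _ hst
  rcases hst.eq_or_lt with rfl | hlt
  · exact le_rfl
  obtain ⟨h, hh, rfl⟩ : ∃ h, 0 < h ∧ t = s + h := ⟨t - s, sub_pos.2 hlt, by ring⟩
  have hd : 0 < d := hb.trans_le hbd
  have hu : a + b * s ∈ Ici x₀ := mem_Ici.2 (by nlinarith)
  have huv : a + b * s ≤ c + d * s := by nlinarith
  simp only [mul_add, ← add_assoc]
  set u := a + b * s
  set v := c + d * s
  have hincr : f (v + d * h) - f v ≤ f (u + d * h) - f u :=
    hf.map_add_sub_map_le_of_le hu (mem_Ici.2 (by nlinarith)) huv (by positivity)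
  have hslope : b * h * (f (u + d * h) - f u) ≤ d * h * (f (u + b * h) - f u) :=
    hf.mul_map_add_sub_map_le hu (mem_Ici.2 (by nlinarith)) (by positivity)
      (mul_le_mul_of_nonneg_right hbd hh.le)
  have hgrow : 0 ≤ f (u + b * h) - f u :=
    sub_nonneg.2 (hf' hu (mem_Ici.2 (by nlinarith)) (by nlinarith))
  have key : b * h * (β * (f (v + d * h) - f v)) ≤ b * h * (α * (f (u + b * h) - f u)) :=
    calc b * h * (β * (f (v + d * h) - f v))
        ≤ β * (b * h * (f (u + d * h) - f u)) := by
          nlinarith [mul_le_mul_of_nonneg_left hincr (by positivity : 0 ≤ β * (b * h))]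
      _ ≤ β * (d * h * (f (u + b * h) - f u)) := by gcongr
      _ ≤ b * h * (α * (f (u + b * h) - f u)) := by
          nlinarith [mul_le_mul_of_nonneg_right hβd (mul_nonneg hh.le hgrow)]
  linarith [le_of_mul_le_mul_left key (by positivity)]

theorem U_monotone_general (a b c d α β : ℝ) (ha : 0 < a) (hb : 0 < b)
    (hβ : 0 < β) (hac : a ≤ c) (hbd : b ≤ d)
    (hβdαb : β * d ≤ α * b)
    (hpos : ∀ t : ℝ, 0 ≤ t → 0 < psi (a + b * t) ∧ 0 < psi (c + d * t)) :
    MonotoneOn (fun t : ℝ => psi (a + b * t) ^ α / psi (c + d * t) ^ β)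
      (Set.Ici 0) := by
  have hψa : 0 < psi a := by simpa using (hpos 0 le_rfl).1
  have hlog := (concaveOn_log_psi ha hψa).monotoneOn_mul_comp_sub_mul_comp
    (monotoneOn_log_psi ha hψa) le_rfl hac hb hbd hβ.le hβdαb
  have hexp : ∀ t ∈ Ici (0 : ℝ), psi (a + b * t) ^ α / psi (c + d * t) ^ β =
      exp (α * log (psi (a + b * t)) - β * log (psi (c + d * t))) := fun t ht => by
    rw [rpow_def_of_pos (hpos t ht).1, rpow_def_of_pos (hpos t ht).2, ← exp_sub, mul_comm α,
      mul_comm β]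
  intro s hs t ht hst
  simp only [hexp s hs, hexp t ht]
  exact exp_le_exp.2 (hlog hs ht hst)

theorem U_monotone (a b c d α β : ℝ) (ha : 0 < a) (hb : 0 < b) (hc : 0 < c)
    (hd : 0 < d) (hα : 0 < α) (hβ : 0 < β) (hac : a ≤ c) (hbd : b ≤ d)
    (hβdαb : β * d ≤ α * b)
    (hpos : ∀ t : ℝ, 0 ≤ t → 0 < psi (a + b * t) ∧ 0 < psi (c + d * t)) :
    MonotoneOn (fun t : ℝ => psi (a + b * t) ^ α / psi (c + d * t) ^ β)
      (Set.Ici 0) :=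
  U_monotone_general a b c d α β ha hb hβ hac hbd hβdαb hpos
end

section
/- Let k ≥ 1 and let α be a positive real number. Then the function W(t) = k^{t/k} · e^{t(kγ−γ)/k} · Γ(α+t)/Γ_k(α+t) is non-decreasing on (0,∞). -/
open Real Filter MeasureTheory Topology

/-- The k-Gamma function `Γ_k(t) = ∫₀^∞ e^{-x^k/k} x^{t-1} dx`. -/
noncomputable def gammak (k t : ℝ) : ℝ :=
  ∫ x in Set.Ioi (0 : ℝ), Real.exp (-(x ^ k) / k) * x ^ (t - 1)

lemma gammak_eq {k t : ℝ} (hk : 0 < k) (ht : 0 < t) :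
    gammak k t = k ^ (t / k - 1) * Real.Gamma (t / k) := by
  have h1 : gammak k t
      = ∫ x in Set.Ioi (0:ℝ), x ^ (t - 1) * Real.exp (-(1/k) * x ^ k) := by
    unfold gammak
    refine MeasureTheory.setIntegral_congr_fun measurableSet_Ioi (fun x hx => ?_)
    rw [mul_comm]
    congr 1
    ring
  rw [h1, integral_rpow_mul_exp_neg_mul_rpow hk (by linarith) (by positivity)]
  have h2 : t - 1 + 1 = t := by ring
  rw [h2]
  rw [one_div, inv_rpow hk.le, ← rpow_neg hk.le, neg_div, neg_neg]
  rw [rpow_sub hk, rpow_one]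
  ring

/-- per-factor monotonicity -/
lemma factor_le' {k : ℝ} (hk : 1 ≤ k) {u v J : ℝ} (hu : 0 < u) (huv : u ≤ v) (hJ : 1 ≤ J) :
    Real.exp (u * ((k-1)/k) / J) * ((u/k + J) / (u + J)) ≤
    Real.exp (v * ((k-1)/k) / J) * ((v/k + J) / (v + J)) := by
  have hk0 : (0:ℝ) < k := lt_of_lt_of_le one_pos hk
  have hJ0 : (0:ℝ) < J := by linarith
  have hv : 0 < v := lt_of_lt_of_le hu huv
  set z : ℝ := (v - u) * ((k-1)/k) / J with hzdef
  have hz0 : 0 ≤ z := by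
    apply div_nonneg _ hJ0.le
    exact mul_nonneg (by linarith) (div_nonneg (by linarith) hk0.le)
  have hexp : Real.exp (v * ((k-1)/k) / J) = Real.exp (u * ((k-1)/k) / J) * Real.exp z := by
    rw [← Real.exp_add, hzdef]
    congr 1
    field_simp
    ring
  have hz' : z * (k * J) = (v - u) * (k - 1) := by
    rw [hzdef]
    field_simp
  have huJ : 0 < u + J := by linarith
  have hvJ : 0 < v + J := by linarith
  have key2 : (u + J*k) * (v + J) * (k*J) ≤ (k*J + (v-u)*(k-1)) * ((v + J*k) * (u + J)) := by
    have hq : k*J*J ≤ (v + J*k) * (u + J) := by nlinarith [mul_pos hv hu, mul_pos hv hJ0, mul_pos (mul_pos hJ0 hk0) hu]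
    have hdiff : (k*J + (v-u)*(k-1)) * ((v + J*k) * (u + J)) - (u + J*k) * (v + J) * (k*J)
        = (k-1)*(v-u)*((v + J*k)*(u + J) - k*J*J) := by ring
    nlinarith [mul_nonneg (mul_nonneg (sub_nonneg.2 hk) (sub_nonneg.2 huv)) (sub_nonneg.2 hq)]
  have key : (u + J*k) * (v + J) ≤ (1 + z) * ((v + J*k) * (u + J)) := by
    have hkJ : (0:ℝ) < k * J := by positivity
    have h3 : (u + J*k) * (v + J) * (k*J) ≤ (1 + z) * ((v + J*k) * (u + J)) * (k*J) := by
      calc (u + J*k) * (v + J) * (k*J) ≤ (k*J + (v-u)*(k-1)) * ((v + J*k) * (u + J)) := key2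
        _ = (1 + z) * ((v + J*k) * (u + J)) * (k*J) := by rw [← hz']; ring
    exact le_of_mul_le_mul_right h3 hkJ
  have e1 : u/k + J = (u + J*k)/k := by field_simp
  have e2 : v/k + J = (v + J*k)/k := by field_simp
  rw [hexp, e1, e2, mul_assoc]
  refine mul_le_mul_of_nonneg_left ?_ (Real.exp_pos _).le
  have eL : (u + J*k)/k / (u + J) = (u + J*k) / (k * (u + J)) := by
    rw [div_div]
  have eR : Real.exp z * ((v + J*k)/k / (v + J)) = (Real.exp z * (v + J*k)) / (k * (v + J)) := by
    rw [div_div, mul_div_assoc]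
  rw [eL, eR, div_le_div_iff₀ (by positivity) (by positivity)]
  have h4 : (1 + z) ≤ Real.exp z := by linarith [Real.add_one_le_exp z]
  calc (u + J*k) * (k * (v + J)) = ((u + J*k) * (v + J)) * k := by ring
    _ ≤ ((1 + z) * ((v + J*k) * (u + J))) * k := mul_le_mul_of_nonneg_right key hk0.le
    _ ≤ ((Real.exp z) * ((v + J*k) * (u + J))) * k := by
        refine mul_le_mul_of_nonneg_right (mul_le_mul_of_nonneg_right h4 ?_) hk0.le
        positivity
    _ = Real.exp z * (v + J*k) * (k * (u + J)) := by ring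

lemma factor_le {k : ℝ} (hk : 1 ≤ k) {u v : ℝ} (hu : 0 < u) (huv : u ≤ v) (j : ℕ) :
    Real.exp (u * ((k-1)/k) / ((j:ℝ)+1)) * ((u/k + ((j:ℝ)+1)) / (u + ((j:ℝ)+1))) ≤
    Real.exp (v * ((k-1)/k) / ((j:ℝ)+1)) * ((v/k + ((j:ℝ)+1)) / (v + ((j:ℝ)+1))) :=
  factor_le' hk hu huv (by linarith [Nat.cast_nonneg (α := ℝ) j])

lemma prod_mono {k : ℝ} (hk : 1 ≤ k) {u v : ℝ} (hu : 0 < u) (huv : u ≤ v) (n : ℕ) :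
    ∏ j ∈ Finset.range n, (Real.exp (u * ((k-1)/k) / ((j:ℝ)+1)) * ((u/k + ((j:ℝ)+1)) / (u + ((j:ℝ)+1)))) ≤
    ∏ j ∈ Finset.range n, (Real.exp (v * ((k-1)/k) / ((j:ℝ)+1)) * ((v/k + ((j:ℝ)+1)) / (v + ((j:ℝ)+1)))) := by
  have hk0 : (0:ℝ) < k := lt_of_lt_of_le one_pos hk
  refine Finset.prod_le_prod (fun j _ => ?_) (fun j _ => factor_le hk hu huv j)
  positivity

lemma tendsto_P {k : ℝ} (hk : 1 ≤ k) {x : ℝ} (hx : 0 < x) :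
    Tendsto (fun n : ℕ => (1/k) * ∏ j ∈ Finset.range n,
        (Real.exp (x * ((k-1)/k) / ((j:ℝ)+1)) * ((x/k + ((j:ℝ)+1)) / (x + ((j:ℝ)+1)))))
      atTop
      (𝓝 (Real.exp (x * ((k-1)/k) * Real.eulerMascheroniConstant) * Real.Gamma x
            / Real.Gamma (x/k))) := by
  have hk0 : (0:ℝ) < k := lt_of_lt_of_le one_pos hk
  have hxk : 0 < x / k := by positivity
  have hT : Tendsto (fun n : ℕ =>
      Real.exp (x * ((k-1)/k) * ((harmonic n : ℝ) - Real.log n)) * Real.GammaSeq x n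
        / Real.GammaSeq (x/k) n) atTop
      (𝓝 (Real.exp (x * ((k-1)/k) * Real.eulerMascheroniConstant) * Real.Gamma x
            / Real.Gamma (x/k))) := by
    apply Tendsto.div
    · exact ((Real.continuous_exp.tendsto _).comp
        (Real.tendsto_harmonic_sub_log.const_mul _)).mul (Real.GammaSeq_tendsto_Gamma x)
    · exact Real.GammaSeq_tendsto_Gamma (x/k)
    · exact (Real.Gamma_pos_of_pos hxk).ne'
  apply hT.congr'
  filter_upwards [eventually_ge_atTop 1] with n hn
  -- identity for n ≥ 1
  have hn0 : (0:ℝ) < (n:ℝ) := by exact_mod_cast hn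
  -- split the product
  rw [Finset.prod_mul_distrib]
  have hexpprod : ∏ j ∈ Finset.range n, Real.exp (x * ((k-1)/k) / ((j:ℝ)+1))
      = Real.exp (x * ((k-1)/k) * (harmonic n : ℝ)) := by
    rw [← Real.exp_sum]
    congr 1
    have : ((harmonic n : ℝ)) = ∑ j ∈ Finset.range n, ((j:ℝ)+1)⁻¹ := by
      rw [harmonic]
      push_cast
      rfl
    rw [this, Finset.mul_sum]
    refine Finset.sum_congr rfl (fun j _ => ?_)
    rw [div_eq_mul_inv]
  have hratio : ∏ j ∈ Finset.range n, ((x/k + ((j:ℝ)+1)) / (x + ((j:ℝ)+1)))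
      = k * ∏ j ∈ Finset.range (n+1), ((x/k + (j:ℝ)) / (x + (j:ℝ))) := by
    rw [Finset.prod_range_succ']
    push_cast
    rw [show (x/k + (0:ℝ)) / (x + 0) = 1/k by
      rw [add_zero, add_zero, div_div, mul_comm, ← div_div, div_self hx.ne']]
    field_simp
  rw [hexpprod, hratio]
  -- now unfold GammaSeq
  have hGden : ∀ z : ℝ, 0 < z → (0:ℝ) < ∏ j ∈ Finset.range (n+1), (z + (j:ℝ)) := by
    intro z hz
    apply Finset.prod_pos
    intro j _
    positivity
  have hpx := hGden x hx
  have hpxk := hGden (x/k) hxk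
  rw [Real.GammaSeq, Real.GammaSeq]
  have hfact : (0:ℝ) < (n.factorial : ℝ) := by positivity
  have hnx : (n:ℝ) ^ x = Real.exp (x * Real.log n) := by
    rw [Real.rpow_def_of_pos hn0, mul_comm]
  have hnxk : (n:ℝ) ^ (x/k) = Real.exp ((x/k) * Real.log n) := by
    rw [Real.rpow_def_of_pos hn0, mul_comm]
  have hprodratio : ∏ j ∈ Finset.range (n+1), ((x/k + (j:ℝ)) / (x + (j:ℝ)))
      = (∏ j ∈ Finset.range (n+1), (x/k + (j:ℝ))) / (∏ j ∈ Finset.range (n+1), (x + (j:ℝ))) := by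
    rw [Finset.prod_div_distrib]
  rw [hprodratio, hnx, hnxk]
  have hexpsplit : Real.exp (x * ((k-1)/k) * ((harmonic n : ℝ) - Real.log n))
      = Real.exp (x * ((k-1)/k) * (harmonic n : ℝ)) *
        Real.exp (x/k * Real.log n) / Real.exp (x * Real.log n) := by
    rw [← Real.exp_add, ← Real.exp_sub]
    congr 1
    field_simp
    ring
  rw [hexpsplit]
  have he1 : Real.exp (x * Real.log n) > 0 := Real.exp_pos _
  have he2 : Real.exp (x/k * Real.log n) > 0 := Real.exp_pos _
  field_simp

lemma F_mono {k : ℝ} (hk : 1 ≤ k) :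
    MonotoneOn (fun x => Real.exp (x * ((k-1)/k) * Real.eulerMascheroniConstant) * Real.Gamma x
      / Real.Gamma (x/k)) (Set.Ioi 0) := by
  intro x hx y hy hxy
  have hk0 : (0:ℝ) < k := lt_of_lt_of_le one_pos hk
  have hx0 : (0:ℝ) < x := hx
  refine le_of_tendsto_of_tendsto' (tendsto_P hk hx0) (tendsto_P hk (hx0.trans_le hxy))
    (fun n => ?_)
  exact mul_le_mul_of_nonneg_left (prod_mono hk hx0 hxy n) (by positivity)

theorem W_monotone (k : ℝ) (hk : 1 ≤ k) (α : ℝ) (hα : 0 < α) :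
    MonotoneOn (fun t : ℝ =>
      k ^ (t / k) * Real.exp (t * (k * eulerMascheroniConstant - eulerMascheroniConstant) / k) *
        Real.Gamma (α + t) / gammak k (α + t)) (Set.Ioi 0) := by
  have hk0 : (0:ℝ) < k := lt_of_lt_of_le one_pos hk
  set γ := Real.eulerMascheroniConstant with hγ
  have hrw : ∀ z : ℝ, 0 < z →
      k ^ (z / k) * Real.exp (z * (k * γ - γ) / k) * Real.Gamma (α + z) / gammak k (α + z)
      = (k ^ (1 - α/k) * Real.exp (-(α * ((k-1)/k) * γ))) *
        (Real.exp ((α + z) * ((k-1)/k) * γ) * Real.Gamma (α + z) / Real.Gamma ((α + z)/k)) := by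
    intro z hz
    rw [gammak_eq hk0 (by linarith : (0:ℝ) < α + z)]
    have hek : Real.exp (z * (k * γ - γ) / k)
        = Real.exp (-(α * ((k-1)/k) * γ)) * Real.exp ((α + z) * ((k-1)/k) * γ) := by
      rw [← Real.exp_add]
      congr 1
      field_simp
      ring
    have hkk : k ^ (z / k) / k ^ ((α + z)/k - 1) = k ^ (1 - α/k) := by
      rw [← Real.rpow_sub hk0]
      congr 1
      field_simp
      ring
    have hG : (0:ℝ) < Real.Gamma ((α + z)/k) := Real.Gamma_pos_of_pos (by positivity)
    have hkp : (0:ℝ) < k ^ ((α + z)/k - 1) := Real.rpow_pos_of_pos hk0 _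
    rw [hek, ← hkk]
    field_simp
  intro s hs t ht hst
  simp only [Set.mem_Ioi] at hs ht
  dsimp only
  rw [hrw s hs, hrw t ht]
  have hmem_s : α + s ∈ Set.Ioi (0:ℝ) := by simp; linarith
  have hmem_t : α + t ∈ Set.Ioi (0:ℝ) := by simp; linarith
  have := F_mono hk hmem_s hmem_t (by linarith)
  exact mul_le_mul_of_nonneg_left this (by positivity)
end

section
/- Let k ≥ 1 and let α be a positive real number. Then for every t ∈ [1,∞), k^{(1−t)/k} e^{(1−t)(kγ−γ)/k} Γ(α+1)/Γ_k(α+1) ≤ Γ(α+t)/Γ_k(α+t). -/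
/-!
Since `Γ_k(s) = k^(s/k - 1) Γ(s/k)`, the claim is `Γ(y) Γ(x/k) ≤ e^((x-y)(1-1/k)γ) Γ(x) Γ(y/k)`
for `y = α + 1 ≤ x = α + t`. Put `a = x, b = y/k, c = y, d = x/k`: then `ab = cd`, so
`(a+j)(b+j) = (c+j)(d+j) + e j` with `e = a + b - c - d ≥ 0`, and each factor of Euler's product
`Γ(s) = lim n^s n! / ∏_{j ≤ n} (s+j)` loses at most `1 + e/j ≤ e^(e/j)`. Together with the powers
`n^(c+d-a-b)` this gives the factor `e^(e (H_n - log n)) → e^(eγ)`.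
-/

open Real

lemma gammak_eq_rpow_mul_Gamma {k t : ℝ} (hk : 0 < k) (ht : 0 < t) :
    gammak k t = k ^ (t / k - 1) * Gamma (t / k) := by
  have h := integral_rpow_mul_exp_neg_mul_rpow hk (by linarith : -1 < t - 1) (inv_pos.2 hk)
  simp only [sub_add_cancel] at h
  calc gammak k t = ∫ x in Set.Ioi 0, x ^ (t - 1) * exp (-k⁻¹ * x ^ k) := by
        rw [gammak]
        simp only [mul_comm (exp _), neg_div, neg_mul, inv_mul_eq_div]
    _ = k ^ (t / k - 1) * Gamma (t / k) := by
        rw [h, inv_rpow hk.le, ← rpow_neg hk.le, neg_div, neg_neg, one_div, ← rpow_neg_one,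
          ← rpow_add hk, sub_eq_add_neg]

lemma harmonic_eq_sum_range_succ_inv (n : ℕ) :
    (harmonic n : ℝ) = ∑ j ∈ Finset.range (n + 1), (j : ℝ)⁻¹ := by
  -- the extra term `j = 0` is `0⁻¹ = 0`
  rw [Finset.sum_range_succ', harmonic]
  push_cast
  simp

lemma add_mul_add_le_exp_mul {a b c d j : ℝ} (hc : 0 ≤ c) (hd : 0 ≤ d) (hj : 0 ≤ j)
    (hprod : a * b = c * d) (hsum : c + d ≤ a + b) :
    (a + j) * (b + j) ≤ exp ((a + b - (c + d)) / j) * ((c + j) * (d + j)) := by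
  set e := a + b - (c + d)
  have he : 0 ≤ e := sub_nonneg.2 hsum
  have hsq : e / j * j ^ 2 = e * j := by
    rcases hj.eq_or_lt with rfl | hj
    · simp
    · field_simp
  calc (a + j) * (b + j) = (c + j) * (d + j) + e / j * j ^ 2 := by
        rw [hsq]; linear_combination hprod
    _ ≤ (c + j) * (d + j) + e / j * ((c + j) * (d + j)) := by
        gcongr; nlinarith
    _ = (e / j + 1) * ((c + j) * (d + j)) := by ring
    _ ≤ exp (e / j) * ((c + j) * (d + j)) := by
        gcongr; exact add_one_le_exp _

lemma prod_add_mul_prod_add_le {a b c d : ℝ} (ha : 0 ≤ a) (hb : 0 ≤ b) (hc : 0 ≤ c) (hd : 0 ≤ d)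
    (hprod : a * b = c * d) (hsum : c + d ≤ a + b) (n : ℕ) :
    (∏ j ∈ Finset.range (n + 1), (a + j)) * ∏ j ∈ Finset.range (n + 1), (b + j) ≤
      exp ((a + b - (c + d)) * harmonic n) *
        ((∏ j ∈ Finset.range (n + 1), (c + j)) * ∏ j ∈ Finset.range (n + 1), (d + j)) := by
  simp only [← Finset.prod_mul_distrib, harmonic_eq_sum_range_succ_inv, Finset.mul_sum,
    exp_sum, ← div_eq_mul_inv]
  exact Finset.prod_le_prod (fun j _ => by positivity)
    fun j _ => add_mul_add_le_exp_mul hc hd j.cast_nonneg hprod hsum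

lemma GammaSeq_mul_GammaSeq_le {a b c d : ℝ} (ha : 0 < a) (hb : 0 < b) (hc : 0 < c) (hd : 0 < d)
    (hprod : a * b = c * d) (hsum : c + d ≤ a + b) {n : ℕ} (hn : n ≠ 0) :
    GammaSeq c n * GammaSeq d n ≤
      exp ((a + b - (c + d)) * (harmonic n - log n)) * (GammaSeq a n * GammaSeq b n) := by
  have hn' : (0 : ℝ) < n := by positivity
  have hexp : exp ((a + b - (c + d)) * (harmonic n - log n)) * ((n : ℝ) ^ a * (n : ℝ) ^ b) =
      exp ((a + b - (c + d)) * harmonic n) * ((n : ℝ) ^ c * (n : ℝ) ^ d) := by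
    rw [← rpow_add hn', ← rpow_add hn', rpow_def_of_pos hn', rpow_def_of_pos hn', ← exp_add,
      ← exp_add]
    ring_nf
  have hP (s : ℝ) (hs : 0 < s) : 0 < ∏ j ∈ Finset.range (n + 1), (s + j) :=
    Finset.prod_pos fun j _ => by positivity
  have key := prod_add_mul_prod_add_le ha.le hb.le hc.le hd.le hprod hsum n
  simp only [GammaSeq, div_mul_div_comm]
  rw [← mul_div_assoc, div_le_div_iff₀ (by positivity) (mul_pos (hP a ha) (hP b hb))]
  set Pcd := (∏ j ∈ Finset.range (n + 1), (c + j)) * ∏ j ∈ Finset.range (n + 1), (d + j)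
  calc _ ≤ (n : ℝ) ^ c * n.factorial * ((n : ℝ) ^ d * n.factorial) *
        (exp ((a + b - (c + d)) * harmonic n) * Pcd) := by gcongr
    _ = _ := by linear_combination (n.factorial : ℝ) ^ 2 * Pcd * hexp.symm

open Filter Topology in
lemma Gamma_mul_Gamma_le {a b c d : ℝ} (ha : 0 < a) (hb : 0 < b) (hc : 0 < c) (hd : 0 < d)
    (hprod : a * b = c * d) (hsum : c + d ≤ a + b) :
    Gamma c * Gamma d ≤ exp ((a + b - (c + d)) * eulerMascheroniConstant) * (Gamma a * Gamma b) :=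
  le_of_tendsto_of_tendsto
    ((GammaSeq_tendsto_Gamma c).mul (GammaSeq_tendsto_Gamma d))
    (((tendsto_harmonic_sub_log.const_mul _).rexp).mul
      ((GammaSeq_tendsto_Gamma a).mul (GammaSeq_tendsto_Gamma b)))
    (eventually_ne_atTop 0 |>.mono fun _ hn =>
      GammaSeq_mul_GammaSeq_le ha hb hc hd hprod hsum hn)

lemma Gamma_mul_Gamma_div_le {k x y : ℝ} (hk : 1 ≤ k) (hy : 0 < y) (hxy : y ≤ x) :
    Gamma y * Gamma (x / k) ≤
      exp ((x - y) * (1 - 1 / k) * eulerMascheroniConstant) * (Gamma x * Gamma (y / k)) := by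
  have hk0 : 0 < k := one_pos.trans_le hk
  have hx : 0 < x := hy.trans_le hxy
  have hsum : y + x / k ≤ x + y / k := by
    have h := div_le_self (sub_nonneg.2 hxy) hk
    have : x / k - y / k = (x - y) / k := by ring
    linarith
  convert Gamma_mul_Gamma_le hx (div_pos hy hk0) hy (div_pos hx hk0) (by ring) hsum using 4
  ring

theorem W_lower_bound_ge_one (k : ℝ) (hk : 1 ≤ k) (α : ℝ) (hα : 0 < α)
    (t : ℝ) (ht : t ∈ Set.Ici (1 : ℝ)) :
    k ^ ((1 - t) / k) *
        Real.exp ((1 - t) * (k * eulerMascheroniConstant - eulerMascheroniConstant) / k) *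
          Real.Gamma (α + 1) / gammak k (α + 1) ≤
      Real.Gamma (α + t) / gammak k (α + t) := by
  have hk0 : 0 < k := one_pos.trans_le hk
  have hα1 : 0 < α + 1 := by linarith
  have hαt : 0 < α + t := by linarith [Set.mem_Ici.1 ht]
  have key := Gamma_mul_Gamma_div_le hk hα1 (by linarith [Set.mem_Ici.1 ht] : α + 1 ≤ α + t)
  set E := (1 - t) * (k * eulerMascheroniConstant - eulerMascheroniConstant) / k with hE
  set F := (α + t - (α + 1)) * (1 - 1 / k) * eulerMascheroniConstant with hF
  have hexp : exp E * exp F = 1 := by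
    rw [← exp_add, exp_eq_one_iff, hE, hF]; field_simp; ring
  have hpow : k ^ ((1 - t) / k) * k ^ ((α + t) / k - 1) = k ^ ((α + 1) / k - 1) := by
    rw [← rpow_add hk0]; ring_nf
  rw [gammak_eq_rpow_mul_Gamma hk0 hα1, gammak_eq_rpow_mul_Gamma hk0 hαt,
    div_le_div_iff₀ (by positivity) (by positivity)]
  calc _ = k ^ ((α + 1) / k - 1) * exp E * (Gamma (α + 1) * Gamma ((α + t) / k)) := by
        rw [← hpow]; ring
    _ ≤ k ^ ((α + 1) / k - 1) * exp E * (exp F * (Gamma (α + t) * Gamma ((α + 1) / k))) := by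
        gcongr
    _ = _ := by
        linear_combination k ^ ((α + 1) / k - 1) * Gamma (α + t) * Gamma ((α + 1) / k) * hexp
end
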